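/- arXiv:2004.02180 — 3 statements merged into one kernel-verified Lean document; each statement's English description precedes it below -/
import Mathlib

section
/- Let m ≤ n and let {A,B} be an (m,p,n)-GMP with GSVD as in the context, with generalized singular values (αᵢ, βᵢ); in particular α_{m+1} = ⋯ = αₙ = 0. Then for every 1 ≤ i ≤ m, αᵢ² equals the difference of maxima: αᵢ² = max_{Ψ ∈ 𝕌_m} Re tr(Aᴴ Ψᴴ 𝒬_i Ψ A (AᴴA + BᴴB)^{-1}) − max_{Ψ ∈ 𝕌_m} Re tr(Aᴴ Ψᴴ 𝒬_{i-1} Ψ A (AᴴA + BᴴB)^{-1}). -/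
/-!
Write `M = AᴴA + BᴴB`. The GSVD gives `M = RᴴR`, hence `A M⁻¹ Aᴴ = U D Uᴴ` with
`D = diag(α₁², …, α_m²)`, and by cyclicity of the trace the quantity maximised is
`Re tr(𝒬_j W D Wᴴ)` with `W = ΦU` unitary. This equals `∑ₗ cₗ αₗ²` with
`cₗ = ∑_{k<j} |W_{kl}|²`; the weights lie in `[0, 1]` and add up to `j`, so for decreasing `αₗ²`
the sum is at most `α₁² + ⋯ + α_j²`, with equality at `W = 1`. The difference of two consecutive
maxima is therefore `αᵢ²`.
-/

open Matrix BigOperators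
open scoped ComplexOrder

/-- The bathtub principle. -/
theorem Finset.sum_mul_le_sum_of_threshold {ι : Type*} [Fintype ι] [DecidableEq ι]
    (s : Finset ι) (c d : ι → ℝ) (t : ℝ) (hc0 : ∀ l, 0 ≤ c l) (hc1 : ∀ l, c l ≤ 1)
    (hcs : ∑ l, c l = s.card) (hs : ∀ l ∈ s, t ≤ d l) (hsc : ∀ l ∉ s, d l ≤ t) :
    ∑ l, c l * d l ≤ ∑ l ∈ s, d l := by
  have termwise : ∀ l, (c l - if l ∈ s then 1 else 0) * (d l - t) ≤ 0 := by
    intro l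
    by_cases hl : l ∈ s
    · simp only [hl, if_true]
      nlinarith [hc1 l, hs l hl]
    · simp only [hl, if_false, sub_zero]
      nlinarith [hc0 l, hsc l hl]
  have expand : ∑ l, (c l - if l ∈ s then 1 else 0) * (d l - t)
      = ∑ l, c l * d l - ∑ l ∈ s, d l - (∑ l, c l - s.card) * t := by
    simp only [sub_mul, mul_sub, Finset.sum_sub_distrib, ← Finset.sum_mul, ite_mul, one_mul,
      zero_mul, Finset.sum_ite_mem, Finset.univ_inter, Finset.sum_const, nsmul_eq_mul]
  rw [hcs, sub_self, zero_mul, sub_zero] at expand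
  linarith [Finset.sum_nonpos fun l (_ : l ∈ Finset.univ) => termwise l]

theorem Fin.exists_threshold_of_antitone {m : ℕ} {d : Fin m → ℝ} (hd : Antitone d) (j : ℕ) :
    ∃ t, (∀ l : Fin m, (l : ℕ) < j → t ≤ d l) ∧ ∀ l : Fin m, ¬ (l : ℕ) < j → d l ≤ t := by
  by_cases hj : j < m
  · exact ⟨d ⟨j, hj⟩, fun l hl => hd (Fin.mk_le_of_le_val hl.le),
      fun l hl => hd (Fin.le_iff_val_le_val.2 (not_lt.1 hl))⟩
  · obtain ⟨t, ht⟩ := (Set.finite_range d).bddBelow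
    exact ⟨t, fun l _ => ht ⟨l, rfl⟩, fun l hl => absurd (l.2.trans_le (not_lt.1 hj)) hl⟩

theorem Fin.sum_filter_lt_add_one_sub_sum_filter_lt {M : Type*} [AddCommGroup M] {m : ℕ}
    (f : Fin m → M) (j : Fin m) :
    ∑ l ∈ Finset.univ.filter (fun l : Fin m => (l : ℕ) < j + 1), f l
      - ∑ l ∈ Finset.univ.filter (fun l : Fin m => (l : ℕ) < j), f l = f j := by
  rw [Finset.sum_filter, Finset.sum_filter, ← Finset.sum_sub_distrib, Finset.sum_eq_single j]
  · simp
  · intro l _ hl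
    have hl' : (l : ℕ) ≠ j := Fin.val_ne_of_ne hl
    by_cases h : (l : ℕ) < j
    · simp [h, h.trans (Nat.lt_succ_self _)]
    · simp [h, show ¬ (l : ℕ) < j + 1 by omega]
  · simp

theorem Matrix.trace_mul_rotate {R : Type*} [CommSemiring R] {m n : Type*} [Fintype m]
    [Fintype n] (Y : Matrix n m R) (P Q Φ : Matrix m m R) (X : Matrix m n R)
    (N : Matrix n n R) :
    trace (Y * P * Q * Φ * X * N) = trace (Q * Φ * (X * N * Y) * P) := by
  rw [show Y * P * Q * Φ * X * N = (Y * P) * (Q * Φ * X * N) by simp only [Matrix.mul_assoc],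
    trace_mul_comm]
  simp only [Matrix.mul_assoc]

section KyFan

variable {𝕜 n : Type*} [RCLike 𝕜] [Fintype n] [DecidableEq n]

theorem Matrix.sum_norm_sq_row_of_mem_unitaryGroup {W : Matrix n n 𝕜}
    (hW : W ∈ unitaryGroup n 𝕜) (k : n) : ∑ l, ‖W k l‖ ^ 2 = 1 := by
  have h : (W * star W) k k = 1 := by rw [mem_unitaryGroup_iff.mp hW, one_apply_eq]
  simp only [mul_apply, star_apply, ← starRingEnd_apply, RCLike.mul_conj] at h
  exact_mod_cast h

theorem Matrix.sum_norm_sq_col_of_mem_unitaryGroup {W : Matrix n n 𝕜}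
    (hW : W ∈ unitaryGroup n 𝕜) (l : n) : ∑ k, ‖W k l‖ ^ 2 = 1 := by
  simpa [conjTranspose_apply] using
    sum_norm_sq_row_of_mem_unitaryGroup (Unitary.star_mem hW) l

theorem Matrix.trace_diagonal_mul_mul_diagonal_mul_conjTranspose (q d : n → ℝ)
    (W : Matrix n n 𝕜) :
    trace (diagonal (fun k => (q k : 𝕜)) * W * diagonal (fun l => (d l : 𝕜)) * Wᴴ)
      = ((∑ l, (∑ k, q k * ‖W k l‖ ^ 2) * d l : ℝ) : 𝕜) := by
  rw [trace]
  simp only [diag, mul_apply, diagonal_apply, mul_ite, ite_mul, mul_zero, zero_mul,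
    Finset.sum_ite_eq, Finset.sum_ite_eq', Finset.mem_univ, if_true, conjTranspose_apply,
    ← starRingEnd_apply, Finset.sum_mul]
  push_cast
  rw [Finset.sum_comm]
  refine Finset.sum_congr rfl fun l _ => Finset.sum_congr rfl fun k _ => ?_
  rw [← RCLike.mul_conj]
  ring

variable (P : n → Prop) [DecidablePred P] (d : n → ℝ) (t : ℝ)
  (hs : ∀ l, P l → t ≤ d l) (hsc : ∀ l, ¬ P l → d l ≤ t)
include hs hsc

theorem Matrix.re_trace_diagonal_indicator_mul_conj_le {W : Matrix n n 𝕜}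
    (hW : W ∈ unitaryGroup n 𝕜) :
    RCLike.re (trace (diagonal (fun k => if P k then 1 else 0) * W *
      diagonal (fun l => (d l : 𝕜)) * Wᴴ)) ≤ ∑ l ∈ Finset.univ.filter P, d l := by
  set q : n → ℝ := fun k => if P k then 1 else 0
  have hq : (fun k => if P k then (1 : 𝕜) else 0) = fun k => (q k : 𝕜) := by
    ext k
    simp only [q, apply_ite (fun x : ℝ => (x : 𝕜)), RCLike.ofReal_one, RCLike.ofReal_zero]
  have hq0 : ∀ k, 0 ≤ q k := fun k => by positivity
  have hq1 : ∀ k, q k ≤ 1 := fun k => by simp only [q]; split_ifs <;> norm_num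
  rw [hq, trace_diagonal_mul_mul_diagonal_mul_conjTranspose, RCLike.ofReal_re]
  refine Finset.sum_mul_le_sum_of_threshold _ _ d t (fun l => ?_) (fun l => ?_) ?_
    (by simpa using hs) (by simpa using hsc)
  · exact Finset.sum_nonneg fun k _ => mul_nonneg (hq0 k) (sq_nonneg _)
  · calc ∑ k, q k * ‖W k l‖ ^ 2 ≤ ∑ k, ‖W k l‖ ^ 2 :=
          Finset.sum_le_sum fun k _ => mul_le_of_le_one_left (sq_nonneg _) (hq1 k)
      _ = 1 := sum_norm_sq_col_of_mem_unitaryGroup hW l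
  · simp only [Finset.sum_comm (γ := n) (f := fun l k => q k * ‖W k l‖ ^ 2), ← Finset.mul_sum,
      sum_norm_sq_row_of_mem_unitaryGroup hW, mul_one, q, Finset.sum_boole]

theorem Matrix.iSup_re_trace_diagonal_indicator_mul_conj_eq {U : Matrix n n 𝕜}
    (hU : U ∈ unitaryGroup n 𝕜) :
    ⨆ Φ : unitaryGroup n 𝕜, RCLike.re (trace (diagonal (fun k => if P k then 1 else 0) *
      (Φ : Matrix n n 𝕜) * (U * diagonal (fun l => (d l : 𝕜)) * Uᴴ) * (Φ : Matrix n n 𝕜)ᴴ))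
      = ∑ l ∈ Finset.univ.filter P, d l := by
  have hconj : ∀ Φ : Matrix n n 𝕜, diagonal (fun k => if P k then 1 else 0) * Φ *
      (U * diagonal (fun l => (d l : 𝕜)) * Uᴴ) * Φᴴ = diagonal (fun k => if P k then 1 else 0) *
      (Φ * U) * diagonal (fun l => (d l : 𝕜)) * (Φ * U)ᴴ := by
    intro Φ
    simp only [conjTranspose_mul, Matrix.mul_assoc]
  have hle : ∀ Φ : unitaryGroup n 𝕜, RCLike.re (trace (diagonal (fun k => if P k then 1 else 0) *
      (Φ : Matrix n n 𝕜) * (U * diagonal (fun l => (d l : 𝕜)) * Uᴴ) * (Φ : Matrix n n 𝕜)ᴴ))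
      ≤ ∑ l ∈ Finset.univ.filter P, d l := fun Φ => by
    rw [hconj]
    exact re_trace_diagonal_indicator_mul_conj_le P d t hs hsc (mul_mem Φ.2 hU)
  refine le_antisymm (ciSup_le hle) (le_ciSup_of_le ⟨_, Set.forall_mem_range.2 hle⟩
    ⟨star U, Unitary.star_mem hU⟩ (le_of_eq ?_))
  rw [hconj, show star U * U = 1 from Unitary.star_mul_self_of_mem hU]
  simp [diagonal_mul_diagonal, Finset.sum_filter, apply_ite]

end KyFan

section GSVD

variable {m n p : ℕ} {A : Matrix (Fin m) (Fin n) ℂ} {B : Matrix (Fin p) (Fin n) ℂ}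
  {U : Matrix (Fin m) (Fin m) ℂ} {R : Matrix (Fin n) (Fin n) ℂ} {α : Fin n → ℝ}

/-- The matrix `Σ_A = (diag(α₁, …, α_m), 0)` of the GSVD. -/
def rectDiagonal (m : ℕ) (α : Fin n → ℝ) : Matrix (Fin m) (Fin n) ℂ :=
  of fun k l => if (k : ℕ) = (l : ℕ) then (α l : ℂ) else 0

theorem rectDiagonal_mul_conjTranspose (hmn : m ≤ n) (α : Fin n → ℝ) :
    rectDiagonal m α * (rectDiagonal m α)ᴴ
      = diagonal fun k => ((α (Fin.castLE hmn k) ^ 2 : ℝ) : ℂ) := by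
  have hcast : ∀ (k : Fin m) (l : Fin n), (k : ℕ) = l ↔ Fin.castLE hmn k = l := by
    simp [Fin.ext_iff]
  refine Matrix.ext fun k k' => ?_
  simp only [rectDiagonal, mul_apply, conjTranspose_apply, of_apply, diagonal_apply, hcast]
  by_cases h : k = k'
  · subst h
    simp [sq]
  · simp [h, Ne.symm h]

theorem conjTranspose_rectDiagonal_mul_self (hzero : ∀ l : Fin n, m ≤ (l : ℕ) → α l = 0) :
    (rectDiagonal m α)ᴴ * rectDiagonal m α = diagonal fun l => ((α l ^ 2 : ℝ) : ℂ) := by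
  refine Matrix.ext fun l l' => ?_
  simp only [rectDiagonal, mul_apply, conjTranspose_apply, of_apply, diagonal_apply]
  by_cases h : l = l'
  · subst h
    by_cases hl : (l : ℕ) < m
    · rw [Finset.sum_eq_single ⟨l, hl⟩]
      · simp [sq]
      · intro k _ hk
        have hkl : (k : ℕ) ≠ l := fun h => hk (Fin.ext h)
        simp [hkl]
      · simp
    · simp [hzero l (not_lt.1 hl)]
  · rw [if_neg h]
    refine Finset.sum_eq_zero fun k _ => ?_
    have : ¬ ((k : ℕ) = l ∧ (k : ℕ) = l') := fun hk => h (Fin.ext (hk.1.symm.trans hk.2))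
    split_ifs <;> simp_all

theorem gram_add_eq_conjTranspose_mul_self (hU : U ∈ unitaryGroup (Fin m) ℂ)
    (hzero : ∀ l : Fin n, m ≤ (l : ℕ) → α l = 0) (hA : A = U * rectDiagonal m α * R)
    (hBB : Bᴴ * B = Rᴴ * diagonal (fun l => ((1 - α l ^ 2 : ℝ) : ℂ)) * R) :
    Aᴴ * A + Bᴴ * B = Rᴴ * R := by
  have hAA : Aᴴ * A = Rᴴ * diagonal (fun l => ((α l ^ 2 : ℝ) : ℂ)) * R := by
    rw [hA, ← conjTranspose_rectDiagonal_mul_self hzero]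
    simp only [conjTranspose_mul, Matrix.mul_assoc]
    rw [← Matrix.mul_assoc Uᴴ, show Uᴴ * U = 1 from Unitary.star_mul_self_of_mem hU,
      Matrix.one_mul]
  rw [hAA, hBB, ← Matrix.add_mul, ← Matrix.mul_add, diagonal_add]
  simp

theorem mul_inv_gram_mul_conjTranspose (hmn : m ≤ n) (hU : U ∈ unitaryGroup (Fin m) ℂ)
    (hR : IsUnit R.det) (hzero : ∀ l : Fin n, m ≤ (l : ℕ) → α l = 0)
    (hA : A = U * rectDiagonal m α * R)
    (hBB : Bᴴ * B = Rᴴ * diagonal (fun l => ((1 - α l ^ 2 : ℝ) : ℂ)) * R) :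
    A * (Aᴴ * A + Bᴴ * B)⁻¹ * Aᴴ
      = U * diagonal (fun k => ((α (Fin.castLE hmn k) ^ 2 : ℝ) : ℂ)) * Uᴴ := by
  have hR' : IsUnit Rᴴ.det := by
    rw [det_conjTranspose]
    exact hR.star
  rw [gram_add_eq_conjTranspose_mul_self hU hzero hA hBB, Matrix.mul_inv_rev,
    ← rectDiagonal_mul_conjTranspose hmn, hA]
  simp only [conjTranspose_mul, Matrix.mul_assoc]
  rw [← Matrix.mul_assoc (Rᴴ)⁻¹, Matrix.nonsing_inv_mul _ hR', Matrix.one_mul,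
    ← Matrix.mul_assoc R, Matrix.mul_nonsing_inv _ hR, Matrix.one_mul]

end GSVD

theorem stmt2_general
    {m p n : ℕ} (hmn : m ≤ n)
    (A : Matrix (Fin m) (Fin n) ℂ) (B : Matrix (Fin p) (Fin n) ℂ)
    (U : Matrix (Fin m) (Fin m) ℂ) (hU : U ∈ Matrix.unitaryGroup (Fin m) ℂ)
    (R : Matrix (Fin n) (Fin n) ℂ) (hR : IsUnit R.det)
    (α : Fin n → ℝ)
    (hα0 : ∀ k, 0 ≤ α k) (hmono : Antitone α)
    (hzero : ∀ k : Fin n, m ≤ (k : ℕ) → α k = 0)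
    (hA : A = U * (Matrix.of fun (k : Fin m) (l : Fin n) =>
        if (k : ℕ) = (l : ℕ) then Complex.ofReal (α l) else 0) * R)
    (hBB : Bᴴ * B = Rᴴ * Matrix.diagonal (fun l => Complex.ofReal (1 - α l ^ 2)) * R)
    (i : Fin n) (him : (i : ℕ) < m) :
    α i ^ 2 =
(⨆ Φ : Matrix.unitaryGroup (Fin m) ℂ,
      (Matrix.trace (Aᴴ * (Φ : Matrix (Fin m) (Fin m) ℂ)ᴴ *
        Matrix.diagonal (fun k : Fin m => if (k : ℕ) ≤ (i : ℕ) then (1 : ℂ) else 0) *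
        (Φ : Matrix (Fin m) (Fin m) ℂ) * A * (Aᴴ * A + Bᴴ * B)⁻¹)).re) -
(⨆ Φ : Matrix.unitaryGroup (Fin m) ℂ,
      (Matrix.trace (Aᴴ * (Φ : Matrix (Fin m) (Fin m) ℂ)ᴴ *
        Matrix.diagonal (fun k : Fin m => if (k : ℕ) < (i : ℕ) then (1 : ℂ) else 0) *
        (Φ : Matrix (Fin m) (Fin m) ℂ) * A * (Aᴴ * A + Bᴴ * B)⁻¹)).re) := by
  set d : Fin m → ℝ := fun k => α (Fin.castLE hmn k) ^ 2
  have hd : Antitone d := fun k k' hkk' =>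
    pow_le_pow_left₀ (hα0 _) (hmono ((Fin.castLE_le_castLE_iff hmn).2 hkk')) 2
  have hAMA : A * (Aᴴ * A + Bᴴ * B)⁻¹ * Aᴴ = U * diagonal (fun k => (d k : ℂ)) * Uᴴ :=
    mul_inv_gram_mul_conjTranspose hmn hU hR hzero hA hBB
  have hmax : ∀ j : ℕ, (⨆ Φ : unitaryGroup (Fin m) ℂ,
      (trace (Aᴴ * (Φ : Matrix (Fin m) (Fin m) ℂ)ᴴ *
        diagonal (fun k : Fin m => if (k : ℕ) < j then (1 : ℂ) else 0) *
        (Φ : Matrix (Fin m) (Fin m) ℂ) * A * (Aᴴ * A + Bᴴ * B)⁻¹)).re)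
      = ∑ l ∈ Finset.univ.filter (fun l : Fin m => (l : ℕ) < j), d l := by
    intro j
    obtain ⟨t, hs, hsc⟩ := Fin.exists_threshold_of_antitone hd j
    simp_rw [trace_mul_rotate, hAMA]
    exact iSup_re_trace_diagonal_indicator_mul_conj_eq _ d t hs hsc hU
  simp_rw [← Nat.lt_add_one_iff, hmax]
  exact (Fin.sum_filter_lt_add_one_sub_sum_filter_lt d ⟨i, him⟩).symm

theorem stmt2
    {m p n : ℕ} (hmn : m ≤ n)
    (A : Matrix (Fin m) (Fin n) ℂ) (B : Matrix (Fin p) (Fin n) ℂ)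
    (hrank : (Matrix.fromRows A B).rank = n)
    (U : Matrix (Fin m) (Fin m) ℂ) (hU : U ∈ Matrix.unitaryGroup (Fin m) ℂ)
    (R : Matrix (Fin n) (Fin n) ℂ) (hR : IsUnit R.det)
    (α : Fin n → ℝ)
    (hα0 : ∀ k, 0 ≤ α k) (hα1 : ∀ k, α k ≤ 1) (hmono : Antitone α)
    (hzero : ∀ k : Fin n, m ≤ (k : ℕ) → α k = 0)
    (hA : A = U * (Matrix.of fun (k : Fin m) (l : Fin n) =>
        if (k : ℕ) = (l : ℕ) then Complex.ofReal (α l) else 0) * R)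
    (hBB : Bᴴ * B = Rᴴ * Matrix.diagonal (fun l => Complex.ofReal (1 - α l ^ 2)) * R)
    (i : Fin n) (him : (i : ℕ) < m) :
    α i ^ 2 =
(⨆ Φ : Matrix.unitaryGroup (Fin m) ℂ,
      (Matrix.trace (Aᴴ * (Φ : Matrix (Fin m) (Fin m) ℂ)ᴴ *
        Matrix.diagonal (fun k : Fin m => if (k : ℕ) ≤ (i : ℕ) then (1 : ℂ) else 0) *
        (Φ : Matrix (Fin m) (Fin m) ℂ) * A * (Aᴴ * A + Bᴴ * B)⁻¹)).re) -
(⨆ Φ : Matrix.unitaryGroup (Fin m) ℂ,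
      (Matrix.trace (Aᴴ * (Φ : Matrix (Fin m) (Fin m) ℂ)ᴴ *
        Matrix.diagonal (fun k : Fin m => if (k : ℕ) < (i : ℕ) then (1 : ℂ) else 0) *
        (Φ : Matrix (Fin m) (Fin m) ℂ) * A * (Aᴴ * A + Bᴴ * B)⁻¹)).re) :=
  stmt2_general hmn A B U hU R hR α hα0 hmono hzero hA hBB i him
end

section
/- Let p ≤ n and let {A,B} be an (m,p,n)-GMP with GSVD as in the context, with generalized singular values (αᵢ, βᵢ); in particular β₁ = ⋯ = β_{n−p} = 0. Then for every n−p+1 ≤ i ≤ n, βᵢ² equals the difference of maxima: βᵢ² = max_{Ψ ∈ 𝕌_p} Re tr(Bᴴ Ψᴴ 𝒫_i Ψ B (AᴴA + BᴴB)^{-1}) − max_{Ψ ∈ 𝕌_p} Re tr(Bᴴ Ψᴴ 𝒫_{i+1} Ψ B (AᴴA + BᴴB)^{-1}). -/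
/-!
Write `M = AᴴA + BᴴB = RᴴR`, so that `B M⁻¹ Bᴴ = V D Vᴴ` with `D = Σ_B Σ_Bᴴ` the
diagonal of the increasing values `β_k²` (`k > n - p`). By cyclicity of the trace, the
functional at `Φ` is `Re tr(𝒫 U D Uᴴ) = ∑_k β_k² w_k` with `U = ΦV` unitary and
`w_k = ∑_{j ∈ 𝒫} |U_jk|²`. Unitarity of `U` gives `0 ≤ w_k ≤ 1` and `∑ w_k = rank 𝒫`, and
for increasing `β_k²` such a weighted sum is largest when all the weight sits on the top
`rank 𝒫` indices, which is attained at `Φ = Vᴴ`. So each maximum is a sum of the largest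
`β_k²`, and two consecutive ones differ by `β_i²`.
-/

open Matrix Finset

theorem sum_mul_le_sum_filter_of_forall_le {ι : Type*} [Fintype ι] (s : ι → Prop)
    [DecidablePred s] (d w : ι → ℝ) (hd : ∀ j k, ¬ s j → s k → d j ≤ d k)
    (hw₀ : ∀ k, 0 ≤ w k) (hw₁ : ∀ k, w k ≤ 1) (hw : ∑ k, w k = #{k | s k}) :
    ∑ k, d k * w k ≤ ∑ k with s k, d k := by
  rcases (univ.filter s).eq_empty_or_nonempty with hS | hS
  · rw [hS, card_empty, Nat.cast_zero, sum_eq_zero_iff_of_nonneg fun k _ => hw₀ k] at hw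
    simp [hS, hw]
  obtain ⟨k₀, hk₀, hmin⟩ := exists_min_image _ d hS
  -- `d k₀` separates the values of `d` off `s` from those on `s`.
  have hpoint : ∀ k,
      d k * w k - (if s k then d k else 0) ≤ d k₀ * (w k - if s k then 1 else 0) := by
    intro k
    by_cases hk : s k
    · simp only [hk, if_true]
      nlinarith [hmin k (by simpa using hk), hw₁ k]
    · simp only [hk, if_false]
      nlinarith [hd k k₀ hk (by simpa using hk₀), hw₀ k]
  have hsum := sum_le_sum fun k (_ : k ∈ univ) => hpoint k
  rw [sum_sub_distrib, ← mul_sum, sum_sub_distrib, hw, sum_boole, ← sum_filter] at hsum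
  simp only [sub_self, mul_zero] at hsum
  linarith

theorem Matrix.sum_normSq_row_eq_one {ι : Type*} [Fintype ι] [DecidableEq ι]
    {U : Matrix ι ι ℂ} (hU : U ∈ unitaryGroup ι ℂ) (j : ι) : ∑ k, Complex.normSq (U j k) = 1 := by
  have h := congr_fun₂ (mem_unitaryGroup_iff.mp hU) j j
  simp only [mul_apply, star_apply, Complex.star_def, Complex.mul_conj, one_apply_eq] at h
  exact_mod_cast h

theorem Matrix.sum_normSq_col_eq_one {ι : Type*} [Fintype ι] [DecidableEq ι]
    {U : Matrix ι ι ℂ} (hU : U ∈ unitaryGroup ι ℂ) (k : ι) : ∑ j, Complex.normSq (U j k) = 1 := by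
  simpa using sum_normSq_row_eq_one (Unitary.star_mem hU) k

theorem Matrix.re_trace_diagonal_mul_mul_diagonal_mul_conjTranspose {ι : Type*} [Fintype ι]
    [DecidableEq ι] (U : Matrix ι ι ℂ) (c d : ι → ℝ) :
    (trace (diagonal (fun j => (c j : ℂ)) * U * diagonal (fun k => (d k : ℂ)) * Uᴴ)).re =
      ∑ j, ∑ k, c j * d k * Complex.normSq (U j k) := by
  simp only [trace, diag_apply, mul_apply, diagonal_apply, conjTranspose_apply, ite_mul, mul_ite,
    zero_mul, mul_zero, sum_ite_eq, sum_ite_eq', mem_univ, if_true, Complex.re_sum]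
  refine sum_congr rfl fun j _ => sum_congr rfl fun k _ => ?_
  rw [Complex.normSq_apply]
  simp [Complex.mul_re, Complex.mul_im]
  ring

section KyFan

variable {ι κ : Type*} [Fintype ι] [DecidableEq ι] [Fintype κ] (s : ι → Prop) [DecidablePred s]
  {B : Matrix ι κ ℂ} {N : Matrix κ κ ℂ} {V : Matrix ι ι ℂ} {d : ι → ℝ}

theorem Matrix.re_trace_conj_diagonal_indicator_eq
    (hBNB : B * N * Bᴴ = V * diagonal (fun k => (d k : ℂ)) * Vᴴ) (Φ : Matrix ι ι ℂ) :
    (trace (Bᴴ * Φᴴ * diagonal (fun k => if s k then (1 : ℂ) else 0) * Φ * B * N)).re =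
      ∑ k, d k * ∑ j with s j, Complex.normSq ((Φ * V) j k) := by
  have hcyc : trace (Bᴴ * Φᴴ * diagonal (fun k => if s k then (1 : ℂ) else 0) * Φ * B * N) =
      trace (diagonal (fun j => ((if s j then 1 else 0 : ℝ) : ℂ)) * (Φ * V) *
        diagonal (fun k => (d k : ℂ)) * (Φ * V)ᴴ) := by
    have hBNB' : ∀ X : Matrix ι ι ℂ,
        B * (N * (Bᴴ * X)) = V * (diagonal (fun k => (d k : ℂ)) * (Vᴴ * X)) := fun X => by
      simp only [← Matrix.mul_assoc, hBNB]
    simp only [Matrix.mul_assoc]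
    rw [trace_mul_comm]
    simp only [Matrix.mul_assoc]
    rw [trace_mul_comm]
    simp only [Matrix.mul_assoc, hBNB', conjTranspose_mul, apply_ite Complex.ofReal,
      Complex.ofReal_one, Complex.ofReal_zero]
  rw [hcyc, re_trace_diagonal_mul_mul_diagonal_mul_conjTranspose, sum_comm]
  simp only [mul_sum, sum_filter]
  refine sum_congr rfl fun k _ => sum_congr rfl fun j _ => ?_
  split_ifs <;> ring

variable {s}

theorem Matrix.iSup_re_trace_conj_diagonal_indicator (hV : V ∈ unitaryGroup ι ℂ)
    (hd : ∀ j k, ¬ s j → s k → d j ≤ d k)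
    (hBNB : B * N * Bᴴ = V * diagonal (fun k => (d k : ℂ)) * Vᴴ) :
    ⨆ Φ : unitaryGroup ι ℂ,
      (trace (Bᴴ * (Φ : Matrix ι ι ℂ)ᴴ * diagonal (fun k => if s k then (1 : ℂ) else 0) *
        (Φ : Matrix ι ι ℂ) * B * N)).re =
      ∑ k with s k, d k := by
  have hle : ∀ Φ : unitaryGroup ι ℂ,
      (trace (Bᴴ * (Φ : Matrix ι ι ℂ)ᴴ * diagonal (fun k => if s k then (1 : ℂ) else 0) *
        (Φ : Matrix ι ι ℂ) * B * N)).re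
        ≤ ∑ k with s k, d k := by
    rintro ⟨Φ, hΦ⟩
    have hU : Φ * V ∈ unitaryGroup ι ℂ := mul_mem hΦ hV
    rw [re_trace_conj_diagonal_indicator_eq s hBNB]
    refine sum_mul_le_sum_filter_of_forall_le s d _ hd
      (fun k => sum_nonneg fun j _ => Complex.normSq_nonneg _)
      (fun k => (sum_le_sum_of_subset_of_nonneg (filter_subset _ _)
        fun j _ _ => Complex.normSq_nonneg _).trans_eq (sum_normSq_col_eq_one hU k)) ?_
    rw [sum_comm, sum_congr rfl fun j _ => sum_normSq_row_eq_one hU j]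
    simp
  have hstarV : star V * V = 1 := mem_unitaryGroup_iff'.mp hV
  refine le_antisymm (ciSup_le hle) (le_ciSup_of_le ⟨_, Set.forall_mem_range.2 hle⟩
    ⟨star V, Unitary.star_mem hV⟩ (le_of_eq ?_))
  rw [re_trace_conj_diagonal_indicator_eq s hBNB, hstarV, sum_filter]
  refine sum_congr rfl fun k _ => ?_
  simp [one_apply]

end KyFan

theorem Matrix.of_ite_eq_mul_conjTranspose {κ ι α : Type*} [Fintype ι] [DecidableEq κ]
    [DecidableEq ι] [CommRing α] [StarRing α] {e : κ → ι} (he : Function.Injective e) (b : ι → α) :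
    (of fun k l => if l = e k then b l else 0) * (of fun k l => if l = e k then b l else 0)ᴴ =
      diagonal fun k => b (e k) * star (b (e k)) := by
  ext k k'
  simp only [mul_apply, conjTranspose_apply, of_apply, apply_ite star, star_zero, ite_mul,
    zero_mul, sum_ite_eq', mem_univ, if_true, diagonal_apply, he.eq_iff]
  split_ifs <;> simp_all

theorem Matrix.conjTranspose_of_ite_eq_mul {κ ι α : Type*} [Fintype κ] [DecidableEq κ]
    [DecidableEq ι] [CommRing α] [StarRing α] {e : κ → ι} (he : Function.Injective e) (b : ι → α)
    (hb : ∀ l, (∀ k, e k ≠ l) → b l = 0) :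
    (of fun k l => if l = e k then b l else 0)ᴴ * (of fun k l => if l = e k then b l else 0) =
      diagonal fun l => star (b l) * b l := by
  ext l l'
  simp only [mul_apply, conjTranspose_apply, of_apply, apply_ite star, star_zero, mul_ite,
    mul_zero, diagonal_apply]
  by_cases hl : ∃ k, e k = l
  · obtain ⟨k₀, rfl⟩ := hl
    rw [sum_eq_single k₀ (fun k _ hk => by simp [he.eq_iff, Ne.symm hk]) (by simp)]
    split_ifs <;> simp_all
  · push Not at hl
    simp [hb l hl, Ne.symm (hl _)]

theorem Matrix.mul_inv_conjTranspose_mul_self_mul_conjTranspose {ι α : Type*} [Fintype ι]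
    [DecidableEq ι] [CommRing α] [StarRing α] {R : Matrix ι ι α} (hR : IsUnit R.det) :
    R * (Rᴴ * R)⁻¹ * Rᴴ = 1 := by
  have hRH : IsUnit Rᴴ.det := by rw [det_conjTranspose]; exact hR.star
  rw [mul_inv_rev, ← Matrix.mul_assoc, mul_nonsing_inv _ hR, Matrix.one_mul,
    nonsing_inv_mul _ hRH]

theorem Matrix.mul_inv_mul_conjTranspose_eq_of_gsvd {κ ι : Type*} [Fintype κ]
    [DecidableEq κ] [Fintype ι] [DecidableEq ι] {μ : Type*} [Fintype μ]
    {A : Matrix μ ι ℂ} {B : Matrix κ ι ℂ} {V : Matrix κ κ ℂ} (hV : V ∈ unitaryGroup κ ℂ)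
    {R : Matrix ι ι ℂ} (hR : IsUnit R.det) {e : κ → ι} (he : Function.Injective e) {β : ι → ℝ}
    (hβ : ∀ l, (∀ k, e k ≠ l) → β l = 0)
    (hB : B = V * (of fun k l => if l = e k then (β l : ℂ) else 0) * R)
    (hAA : Aᴴ * A = Rᴴ * diagonal (fun l => ((1 - β l ^ 2 : ℝ) : ℂ)) * R) :
    B * (Aᴴ * A + Bᴴ * B)⁻¹ * Bᴴ = V * diagonal (fun k => ((β (e k) ^ 2 : ℝ) : ℂ)) * Vᴴ := by
  set S : Matrix κ ι ℂ := of fun k l => if l = e k then (β l : ℂ) else 0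
  have hSS : Sᴴ * S = diagonal fun l => ((β l ^ 2 : ℝ) : ℂ) := by
    rw [conjTranspose_of_ite_eq_mul he _ fun l hl => by simp [hβ l hl]]
    simp [sq]
  have hSS' : S * Sᴴ = diagonal fun k => ((β (e k) ^ 2 : ℝ) : ℂ) := by
    rw [of_ite_eq_mul_conjTranspose he]
    simp [sq]
  have hM : Aᴴ * A + Bᴴ * B = Rᴴ * R := by
    have hVV : Vᴴ * V = 1 := mem_unitaryGroup_iff'.mp hV
    have hBB : Bᴴ * B = Rᴴ * (Sᴴ * S) * R := by
      rw [hB]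
      simp only [conjTranspose_mul, Matrix.mul_assoc]
      rw [← Matrix.mul_assoc Vᴴ, hVV, Matrix.one_mul]
    rw [hAA, hBB, hSS, ← Matrix.add_mul, ← Matrix.mul_add, diagonal_add]
    simp
  rw [hM, hB, ← hSS']
  calc V * S * R * (Rᴴ * R)⁻¹ * (V * S * R)ᴴ
      = V * S * (R * (Rᴴ * R)⁻¹ * Rᴴ) * Sᴴ * Vᴴ := by
        simp only [conjTranspose_mul, Matrix.mul_assoc]
    _ = V * (S * Sᴴ) * Vᴴ := by
        rw [mul_inv_conjTranspose_mul_self_mul_conjTranspose hR, Matrix.mul_one,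
          Matrix.mul_assoc V]

theorem stmt3_general
    {m p n : ℕ} (hpn : p ≤ n)
    (A : Matrix (Fin m) (Fin n) ℂ) (B : Matrix (Fin p) (Fin n) ℂ)
    (V : Matrix (Fin p) (Fin p) ℂ) (hV : V ∈ Matrix.unitaryGroup (Fin p) ℂ)
    (R : Matrix (Fin n) (Fin n) ℂ) (hR : IsUnit R.det)
    (β : Fin n → ℝ)
    (hβ0 : ∀ k, 0 ≤ β k) (hmono : Monotone β)
    (hzero : ∀ k : Fin n, (k : ℕ) + p < n → β k = 0)
    (hB : B = V * (Matrix.of fun (k : Fin p) (l : Fin n) =>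
        if (l : ℕ) + p = n + (k : ℕ) then Complex.ofReal (β l) else 0) * R)
    (hAA : Aᴴ * A = Rᴴ * Matrix.diagonal (fun l => Complex.ofReal (1 - β l ^ 2)) * R)
    (i : Fin n) (hip : n ≤ p + (i : ℕ)) :
    β i ^ 2 =
(⨆ Φ : Matrix.unitaryGroup (Fin p) ℂ,
      (Matrix.trace (Bᴴ * (Φ : Matrix (Fin p) (Fin p) ℂ)ᴴ *
        Matrix.diagonal (fun k : Fin p => if p + (i : ℕ) ≤ (k : ℕ) + n then (1 : ℂ) else 0) *
        (Φ : Matrix (Fin p) (Fin p) ℂ) * B * (Aᴴ * A + Bᴴ * B)⁻¹)).re) -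
(⨆ Φ : Matrix.unitaryGroup (Fin p) ℂ,
      (Matrix.trace (Bᴴ * (Φ : Matrix (Fin p) (Fin p) ℂ)ᴴ *
        Matrix.diagonal (fun k : Fin p => if p + (i : ℕ) + 1 ≤ (k : ℕ) + n then (1 : ℂ) else 0) *
        (Φ : Matrix (Fin p) (Fin p) ℂ) * B * (Aᴴ * A + Bᴴ * B)⁻¹)).re) := by
  let e : Fin p → Fin n := fun k => ⟨n - p + k, by omega⟩
  have he : Function.Injective e := fun k k' h => by simpa [e, Fin.ext_iff] using h
  have hβ_off : ∀ l, (∀ k, e k ≠ l) → β l = 0 := fun l hl => hzero l <| by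
    by_contra h
    exact hl ⟨l + p - n, by omega⟩ (Fin.ext (by simp only [e]; omega))
  have hSigma :
      (of fun (k : Fin p) (l : Fin n) => if (l : ℕ) + p = n + k then (β l : ℂ) else 0) =
        of fun k l => if l = e k then (β l : ℂ) else 0 := by
    ext k l
    exact if_congr (by simp only [e, Fin.ext_iff]; omega) rfl rfl
  have hBNB := Matrix.mul_inv_mul_conjTranspose_eq_of_gsvd hV hR he hβ_off
    (hB.trans (by rw [hSigma])) hAA
  have hd : ∀ t : ℕ, ∀ j k : Fin p, ¬ t ≤ (j : ℕ) + n → t ≤ (k : ℕ) + n →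
      β (e j) ^ 2 ≤ β (e k) ^ 2 := fun t j k hj hk =>
    pow_le_pow_left₀ (hβ0 _) (hmono (Fin.le_def.2 (by simp only [e]; omega))) 2
  rw [iSup_re_trace_conj_diagonal_indicator hV (hd _) hBNB,
    iSup_re_trace_conj_diagonal_indicator hV (hd _) hBNB]
  let k₀ : Fin p := ⟨p + i - n, by omega⟩
  have hsplit : univ.filter (fun k : Fin p => p + (i : ℕ) ≤ k + n) =
      insert k₀ (univ.filter fun k : Fin p => p + (i : ℕ) + 1 ≤ k + n) := by
    ext k
    simp only [mem_filter, mem_univ, true_and, mem_insert, k₀, Fin.ext_iff]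
    omega
  have hk₀ : e k₀ = i := Fin.ext (by simp only [e, k₀]; omega)
  rw [hsplit, sum_insert (by simp [k₀]; omega), add_sub_cancel_right, hk₀]

theorem stmt3
    {m p n : ℕ} (hpn : p ≤ n)
    (A : Matrix (Fin m) (Fin n) ℂ) (B : Matrix (Fin p) (Fin n) ℂ)
    (hrank : (Matrix.fromRows A B).rank = n)
    (V : Matrix (Fin p) (Fin p) ℂ) (hV : V ∈ Matrix.unitaryGroup (Fin p) ℂ)
    (R : Matrix (Fin n) (Fin n) ℂ) (hR : IsUnit R.det)
    (β : Fin n → ℝ)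
    (hβ0 : ∀ k, 0 ≤ β k) (hβ1 : ∀ k, β k ≤ 1) (hmono : Monotone β)
    (hzero : ∀ k : Fin n, (k : ℕ) + p < n → β k = 0)
    (hB : B = V * (Matrix.of fun (k : Fin p) (l : Fin n) =>
        if (l : ℕ) + p = n + (k : ℕ) then Complex.ofReal (β l) else 0) * R)
    (hAA : Aᴴ * A = Rᴴ * Matrix.diagonal (fun l => Complex.ofReal (1 - β l ^ 2)) * R)
    (i : Fin n) (hip : n ≤ p + (i : ℕ)) :
    β i ^ 2 =
(⨆ Φ : Matrix.unitaryGroup (Fin p) ℂ,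
      (Matrix.trace (Bᴴ * (Φ : Matrix (Fin p) (Fin p) ℂ)ᴴ *
        Matrix.diagonal (fun k : Fin p => if p + (i : ℕ) ≤ (k : ℕ) + n then (1 : ℂ) else 0) *
        (Φ : Matrix (Fin p) (Fin p) ℂ) * B * (Aᴴ * A + Bᴴ * B)⁻¹)).re) -
(⨆ Φ : Matrix.unitaryGroup (Fin p) ℂ,
      (Matrix.trace (Bᴴ * (Φ : Matrix (Fin p) (Fin p) ℂ)ᴴ *
        Matrix.diagonal (fun k : Fin p => if p + (i : ℕ) + 1 ≤ (k : ℕ) + n then (1 : ℂ) else 0) *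
        (Φ : Matrix (Fin p) (Fin p) ℂ) * B * (Aᴴ * A + Bᴴ * B)⁻¹)).re) :=
  stmt3_general hpn A B V hV R hR β hβ0 hmono hzero hB hAA i hip
end

section
/- Let n ≤ p and let {A,B} be an (m,p,n)-GMP with GSVD as in the context, with generalized singular values (αᵢ, βᵢ). Then for every 1 ≤ i ≤ n, max_{Φ ∈ 𝕌_p} Re tr(Bᴴ Φᴴ P_i Φ B (AᴴA + BᴴB)^{-1}) = βᵢ² + β_{i+1}² + ⋯ + βₙ². -/
/-!
Writing `B = V Σ_B R` and `AᴴA + BᴴB = RᴴR`, the similarity `X ↦ Rᴴ X Rᴴ⁻¹` removes `R` from the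
trace, which becomes `∑ₗ βₗ² dₗ` with `dₗ` the diagonal entries of `Wᴴ Pᵢ W`, `W = Φ V` unitary,
taken at the rows of `Σ_B` that carry `diag β`. These entries lie in `[0, 1]` and sum to at most
`rank Pᵢ = n - i + 1`, so with `β` nondecreasing the sum is at most the sum of the last
`n - i + 1` of the `βₗ²`; `Φ = Vᴴ` attains it.
-/

open Matrix BigOperators
open scoped ComplexOrder

theorem sum_mul_le_sum_Ici_of_monotone {ι : Type*} [Fintype ι] [LinearOrder ι]
    [LocallyFiniteOrderTop ι] {w d : ι → ℝ} (hw : Monotone w) (i : ι) (hwi : 0 ≤ w i)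
    (hd0 : ∀ k, 0 ≤ d k) (hd1 : ∀ k, d k ≤ 1) (hsum : ∑ k, d k ≤ (Finset.Ici i).card) :
    ∑ k, w k * d k ≤ ∑ k ∈ Finset.Ici i, w k := by
  set e : ι → ℝ := fun k => if i ≤ k then 1 else 0
  have hcard : ∑ k, e k = (Finset.Ici i).card := by
    simp [e, Finset.sum_boole, Finset.filter_le_eq_Ici]
  have hsumIci : ∑ k ∈ Finset.Ici i, w k = ∑ k, w k * e k := by
    simp [e, mul_ite, Finset.sum_ite, Finset.filter_le_eq_Ici]
  -- `w i` separates the weights inside `Ici i` from those outside it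
  have hpt : ∀ k, w i * (e k - d k) ≤ w k * (e k - d k) := by
    intro k
    by_cases hk : i ≤ k
    · simp only [e, if_pos hk]
      exact mul_le_mul_of_nonneg_right (hw hk) (by linarith [hd1 k])
    · simp only [e, if_neg hk]
      nlinarith [hw (le_of_lt (not_le.mp hk)), hd0 k]
  have hgap : w i * (∑ k, e k - ∑ k, d k) ≤ ∑ k, w k * e k - ∑ k, w k * d k := by
    simpa only [Finset.mul_sum, mul_sub, Finset.sum_sub_distrib] using
      Finset.sum_le_sum fun k (_ : k ∈ Finset.univ) => hpt k
  rw [hsumIci]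
  linarith [mul_nonneg hwi (sub_nonneg.2 (hcard ▸ hsum))]

namespace Matrix

theorem trace_conjTranspose_mul_mul_mul_inv_gram {K m n : Type*} [CommRing K] [StarRing K]
    [Fintype m] [Fintype n] [DecidableEq n] {R : Matrix n n K} (hR : IsUnit R.det)
    (C : Matrix m n K) (X : Matrix m m K) :
    trace ((C * R)ᴴ * X * (C * R) * (Rᴴ * R)⁻¹) = trace (Cᴴ * X * C) := by
  have hR' : IsUnit Rᴴ.det := by rw [det_conjTranspose]; exact hR.star
  calc trace ((C * R)ᴴ * X * (C * R) * (Rᴴ * R)⁻¹)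
      = trace (Rᴴ * ((Cᴴ * X * C) * (R * R⁻¹) * Rᴴ⁻¹)) := by
        simp only [conjTranspose_mul, mul_inv_rev, Matrix.mul_assoc]
    _ = trace (Cᴴ * X * C * (Rᴴ⁻¹ * Rᴴ)) := by
        rw [trace_mul_comm, mul_nonsing_inv _ hR, Matrix.mul_one, Matrix.mul_assoc]
    _ = trace (Cᴴ * X * C) := by rw [nonsing_inv_mul _ hR', Matrix.mul_one]

theorem conjTranspose_mul_mul_apply_of_apply_eq_ite {α ι κ : Type*} [Semiring α] [StarRing α]
    [Fintype κ] [DecidableEq κ] {S : Matrix κ ι α} {φ : ι → κ} {b : ι → α}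
    (hS : ∀ k l, S k l = if k = φ l then b l else 0) (X : Matrix κ κ α) (l l' : ι) :
    (Sᴴ * X * S) l l' = star (b l) * X (φ l) (φ l') * b l' := by
  simp only [mul_apply, conjTranspose_apply, hS, apply_ite star, star_zero, ite_mul, zero_mul,
    mul_ite, mul_zero, Finset.sum_ite_eq', Finset.mem_univ, if_true]

variable {𝕜 ι κ : Type*} [RCLike 𝕜] [Fintype κ] [DecidableEq κ]

theorem conjTranspose_mul_diagonal_mul_apply_self (W : Matrix κ κ 𝕜) (c : κ → ℝ) (k : κ) :
    (Wᴴ * diagonal (fun j => (c j : 𝕜)) * W) k k = ((∑ j, c j * ‖W j k‖ ^ 2 : ℝ) : 𝕜) := by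
  simp only [mul_apply, diagonal_apply, conjTranspose_apply, mul_ite, mul_zero,
    Finset.sum_ite_eq', Finset.mem_univ, if_true]
  push_cast
  refine Finset.sum_congr rfl fun j _ => ?_
  rw [← RCLike.conj_mul, RCLike.star_def]
  ring

theorem sum_norm_sq_apply_left_of_mem_unitaryGroup {W : Matrix κ κ 𝕜}
    (hW : W ∈ unitaryGroup κ 𝕜) (k : κ) : ∑ j, ‖W j k‖ ^ 2 = 1 := by
  have h := conjTranspose_mul_diagonal_mul_apply_self W 1 k
  simp only [Pi.one_apply, RCLike.ofReal_one, diagonal_one, Matrix.mul_one, one_mul] at h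
  rw [← star_eq_conjTranspose, Unitary.star_mul_self_of_mem hW, one_apply_eq] at h
  exact_mod_cast h.symm

theorem sum_norm_sq_apply_right_of_mem_unitaryGroup {W : Matrix κ κ 𝕜}
    (hW : W ∈ unitaryGroup κ 𝕜) (j : κ) : ∑ k, ‖W j k‖ ^ 2 = 1 := by
  simpa [conjTranspose_apply] using
    sum_norm_sq_apply_left_of_mem_unitaryGroup (Unitary.star_mem hW) j

theorem sum_mul_sum_mul_norm_sq_le [Fintype ι] [LinearOrder ι] [LocallyFiniteOrderTop ι]
    {w : ι → ℝ} (hw : Monotone w) (i : ι) (hwi : 0 ≤ w i) {φ : ι → κ}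
    (hφ : Function.Injective φ) {W : Matrix κ κ 𝕜} (hW : W ∈ unitaryGroup κ 𝕜) {c : κ → ℝ}
    (hc0 : ∀ j, 0 ≤ c j) (hc1 : ∀ j, c j ≤ 1) (hc : ∑ j, c j ≤ (Finset.Ici i).card) :
    ∑ l, w l * ∑ j, c j * ‖W j (φ l)‖ ^ 2 ≤ ∑ l ∈ Finset.Ici i, w l := by
  set d : κ → ℝ := fun k => ∑ j, c j * ‖W j k‖ ^ 2
  have hd0 : ∀ k, 0 ≤ d k := fun k => Finset.sum_nonneg fun j _ => by positivity [hc0 j]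
  have hd1 : ∀ k, d k ≤ 1 := fun k => by
    calc d k ≤ ∑ j, ‖W j k‖ ^ 2 :=
          Finset.sum_le_sum fun j _ => mul_le_of_le_one_left (by positivity) (hc1 j)
      _ = 1 := sum_norm_sq_apply_left_of_mem_unitaryGroup hW k
  have hsum : ∑ k, d k = ∑ j, c j := by
    simp only [d, Finset.sum_comm (γ := κ), ← Finset.mul_sum,
      sum_norm_sq_apply_right_of_mem_unitaryGroup hW, mul_one]
  refine sum_mul_le_sum_Ici_of_monotone hw i hwi (fun l => hd0 _) (fun l => hd1 _) ?_
  calc ∑ l, d (φ l) = ∑ k ∈ Finset.univ.map ⟨φ, hφ⟩, d k := (Finset.sum_map _ ⟨φ, hφ⟩ d).symm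
    _ ≤ ∑ k, d k :=
        Finset.sum_le_sum_of_subset_of_nonneg (Finset.subset_univ _) fun k _ _ => hd0 k
    _ ≤ _ := hsum ▸ hc

end Matrix

namespace Fin

variable {n p : ℕ}

/-- The last `n` indices of `Fin p`: the rows of `Σ_B` that carry `diag β`. -/
def toTail (hnp : n ≤ p) (l : Fin n) : Fin p := ⟨p - n + l, by omega⟩

theorem toTail_injective (hnp : n ≤ p) : Function.Injective (toTail hnp) :=
  fun a b h => Fin.ext (by simp only [toTail, Fin.mk.injEq] at h; omega)

theorem add_eq_add_iff_eq_toTail (hnp : n ≤ p) (k : Fin p) (l : Fin n) :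
    (k : ℕ) + n = p + l ↔ k = toTail hnp l := by
  simp only [toTail, Fin.ext_iff]; omega

end Fin

/-- The diagonal of the paper's `P_{i+1}`: indices start at `0` here. -/
def tailIndicator (n : ℕ) {p : ℕ} (i : Fin n) (k : Fin p) : ℝ :=
  if p + (i : ℕ) ≤ (k : ℕ) + n then 1 else 0

theorem tailIndicator_nonneg {n p : ℕ} (i : Fin n) (k : Fin p) : 0 ≤ tailIndicator n i k := by
  unfold tailIndicator; split_ifs <;> norm_num

theorem tailIndicator_le_one {n p : ℕ} (i : Fin n) (k : Fin p) : tailIndicator n i k ≤ 1 := by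
  unfold tailIndicator; split_ifs <;> norm_num

theorem tailIndicator_toTail {n p : ℕ} (hnp : n ≤ p) (i l : Fin n) :
    tailIndicator n i (Fin.toTail hnp l) = if i ≤ l then 1 else 0 := by
  simp only [tailIndicator, Fin.toTail, Fin.le_def]
  congr 1
  exact propext (by omega)

theorem sum_tailIndicator {n p : ℕ} (hnp : n ≤ p) (i : Fin n) :
    ∑ k : Fin p, tailIndicator n i k = (Finset.Ici i).card := by
  have h : ({k : Fin p | p + (i : ℕ) ≤ (k : ℕ) + n} : Finset (Fin p)) =
      Finset.Ici (Fin.toTail hnp i) := by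
    ext k
    simp only [Finset.mem_filter, Finset.mem_univ, true_and, Finset.mem_Ici, Fin.le_def,
      Fin.toTail]
    omega
  simp only [tailIndicator]
  rw [Finset.sum_boole, h, Fin.card_Ici, Fin.card_Ici]
  simp only [Fin.toTail]
  norm_cast
  omega

/-- The matrix `Σ_B`: a `(p - n) × n` zero block on top of `diag β`. -/
def gsvdSigma {n : ℕ} (p : ℕ) (β : Fin n → ℝ) : Matrix (Fin p) (Fin n) ℂ :=
  of fun k l => if (k : ℕ) + n = p + (l : ℕ) then (β l : ℂ) else 0

section GSVD

variable {n p : ℕ} (hnp : n ≤ p) (β : Fin n → ℝ)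
include hnp

theorem gsvdSigma_conjTranspose_mul_mul_apply (X : Matrix (Fin p) (Fin p) ℂ) (l l' : Fin n) :
    ((gsvdSigma p β)ᴴ * X * gsvdSigma p β) l l' =
      β l * X (Fin.toTail hnp l) (Fin.toTail hnp l') * β l' := by
  rw [conjTranspose_mul_mul_apply_of_apply_eq_ite (φ := Fin.toTail hnp) (b := fun l => (β l : ℂ))
    fun k l => by simp only [gsvdSigma, of_apply, Fin.add_eq_add_iff_eq_toTail hnp]]
  simp

theorem gsvdSigma_conjTranspose_mul_self :
    (gsvdSigma p β)ᴴ * gsvdSigma p β = diagonal fun l => (β l : ℂ) ^ 2 := by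
  ext l l'
  rw [← Matrix.mul_one (gsvdSigma p β)ᴴ, gsvdSigma_conjTranspose_mul_mul_apply hnp]
  simp only [one_apply, (Fin.toTail_injective hnp).eq_iff, diagonal_apply]
  split_ifs with h
  · subst h; ring
  · simp

theorem trace_gsvdSigma_conjTranspose_mul_mul (X : Matrix (Fin p) (Fin p) ℂ) :
    trace ((gsvdSigma p β)ᴴ * X * gsvdSigma p β) =
      ∑ l, (β l : ℂ) ^ 2 * X (Fin.toTail hnp l) (Fin.toTail hnp l) := by
  simp only [trace, diag, gsvdSigma_conjTranspose_mul_mul_apply hnp]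
  exact Finset.sum_congr rfl fun l _ => by ring

end GSVD

theorem re_trace_gsvd_objective {n p : ℕ} (hnp : n ≤ p) (β : Fin n → ℝ)
    {B : Matrix (Fin p) (Fin n) ℂ} {V : Matrix (Fin p) (Fin p) ℂ} {R : Matrix (Fin n) (Fin n) ℂ}
    (hR : IsUnit R.det) (hB : B = V * gsvdSigma p β * R) (Φ : Matrix (Fin p) (Fin p) ℂ)
    (c : Fin p → ℝ) :
    (trace (Bᴴ * Φᴴ * diagonal (fun k => (c k : ℂ)) * Φ * B * (Rᴴ * R)⁻¹)).re =
      ∑ l, β l ^ 2 * ∑ j, c j * ‖(Φ * V) j (Fin.toTail hnp l)‖ ^ 2 := by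
  set D := diagonal fun k => (c k : ℂ)
  set W := Φ * V
  have hX : Bᴴ * Φᴴ * D * Φ * B =
      (V * gsvdSigma p β * R)ᴴ * (Φᴴ * D * Φ) * (V * gsvdSigma p β * R) := by
    simp only [hB, Matrix.mul_assoc]
  have hconj : (V * gsvdSigma p β)ᴴ * (Φᴴ * D * Φ) * (V * gsvdSigma p β) =
      (gsvdSigma p β)ᴴ * (Wᴴ * D * W) * gsvdSigma p β := by
    simp only [W, conjTranspose_mul, Matrix.mul_assoc]
  have hdiag : ∀ k, (Wᴴ * D * W) k k = ((∑ j, c j * ‖W j k‖ ^ 2 : ℝ) : ℂ) :=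
    conjTranspose_mul_diagonal_mul_apply_self W c
  rw [hX, trace_conjTranspose_mul_mul_mul_inv_gram hR, hconj,
    trace_gsvdSigma_conjTranspose_mul_mul hnp]
  simp only [hdiag]
  norm_cast

theorem gram_eq_of_gsvd {m n p : ℕ} (hnp : n ≤ p) {β : Fin n → ℝ} {A : Matrix (Fin m) (Fin n) ℂ}
    {B : Matrix (Fin p) (Fin n) ℂ} {V : Matrix (Fin p) (Fin p) ℂ} {R : Matrix (Fin n) (Fin n) ℂ}
    (hV : V ∈ unitaryGroup (Fin p) ℂ) (hB : B = V * gsvdSigma p β * R)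
    (hAA : Aᴴ * A = Rᴴ * diagonal (fun l => ((1 - β l ^ 2 : ℝ) : ℂ)) * R) :
    Aᴴ * A + Bᴴ * B = Rᴴ * R := by
  have hVV : Vᴴ * V = 1 := Unitary.star_mul_self_of_mem hV
  have hBB : Bᴴ * B = Rᴴ * diagonal (fun l => (β l : ℂ) ^ 2) * R := by
    rw [hB, ← gsvdSigma_conjTranspose_mul_self hnp]
    simp only [conjTranspose_mul, Matrix.mul_assoc]
    rw [← Matrix.mul_assoc Vᴴ V, hVV, Matrix.one_mul]
  rw [hAA, hBB, ← Matrix.add_mul, ← Matrix.mul_add, diagonal_add, ← Matrix.mul_one Rᴴ]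
  simp

theorem stmt9_general
    {m p n : ℕ} (hnp : n ≤ p)
    (A : Matrix (Fin m) (Fin n) ℂ) (B : Matrix (Fin p) (Fin n) ℂ)
    (V : Matrix (Fin p) (Fin p) ℂ) (hV : V ∈ Matrix.unitaryGroup (Fin p) ℂ)
    (R : Matrix (Fin n) (Fin n) ℂ) (hR : IsUnit R.det)
    (β : Fin n → ℝ)
    (hβ0 : ∀ k, 0 ≤ β k) (hmono : Monotone β)
    (hB : B = V * (Matrix.of fun (k : Fin p) (l : Fin n) =>
        if (k : ℕ) + n = p + (l : ℕ) then Complex.ofReal (β l) else 0) * R)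
    (hAA : Aᴴ * A = Rᴴ * Matrix.diagonal (fun l => Complex.ofReal (1 - β l ^ 2)) * R)
    (i : Fin n) :
(⨆ Φ : Matrix.unitaryGroup (Fin p) ℂ,
      (Matrix.trace (Bᴴ * (Φ : Matrix (Fin p) (Fin p) ℂ)ᴴ *
        Matrix.diagonal (fun k : Fin p => if p + (i : ℕ) ≤ (k : ℕ) + n then (1 : ℂ) else 0) *
        (Φ : Matrix (Fin p) (Fin p) ℂ) * B * (Aᴴ * A + Bᴴ * B)⁻¹)).re) =
      ∑ k ∈ Finset.Ici i, β k ^ 2 := by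
  replace hB : B = V * gsvdSigma p β * R := hB
  have hP : (fun k : Fin p => if p + (i : ℕ) ≤ (k : ℕ) + n then (1 : ℂ) else 0) =
      fun k => (tailIndicator n i k : ℂ) := by
    funext k; simp [tailIndicator, apply_ite]
  simp only [hP, gram_eq_of_gsvd hnp hV hB hAA, re_trace_gsvd_objective hnp β hR hB]
  refine IsGreatest.csSup_eq ⟨⟨⟨star V, Unitary.star_mem hV⟩, ?_⟩, ?_⟩
  · simp only [Unitary.star_mul_self_of_mem hV, one_apply, apply_ite (fun z : ℂ => ‖z‖ ^ 2),
      norm_one, norm_zero, one_pow, zero_pow two_ne_zero, mul_ite, mul_one, mul_zero,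
      Finset.sum_ite_eq', Finset.mem_univ, if_true, tailIndicator_toTail hnp,
      Finset.sum_ite, Finset.sum_const_zero, add_zero, Finset.filter_le_eq_Ici]
  · rintro _ ⟨Φ, rfl⟩
    exact sum_mul_sum_mul_norm_sq_le (fun a b h => pow_le_pow_left₀ (hβ0 a) (hmono h) 2) i
      (sq_nonneg _) (Fin.toTail_injective hnp) (mul_mem Φ.2 hV) (tailIndicator_nonneg i)
      (tailIndicator_le_one i) (sum_tailIndicator hnp i).le

theorem stmt9
    {m p n : ℕ} (hnp : n ≤ p)
    (A : Matrix (Fin m) (Fin n) ℂ) (B : Matrix (Fin p) (Fin n) ℂ)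
    (hrank : (Matrix.fromRows A B).rank = n)
    (V : Matrix (Fin p) (Fin p) ℂ) (hV : V ∈ Matrix.unitaryGroup (Fin p) ℂ)
    (R : Matrix (Fin n) (Fin n) ℂ) (hR : IsUnit R.det)
    (β : Fin n → ℝ)
    (hβ0 : ∀ k, 0 ≤ β k) (hβ1 : ∀ k, β k ≤ 1) (hmono : Monotone β)
    (hB : B = V * (Matrix.of fun (k : Fin p) (l : Fin n) =>
        if (k : ℕ) + n = p + (l : ℕ) then Complex.ofReal (β l) else 0) * R)
    (hAA : Aᴴ * A = Rᴴ * Matrix.diagonal (fun l => Complex.ofReal (1 - β l ^ 2)) * R)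
    (i : Fin n) :
(⨆ Φ : Matrix.unitaryGroup (Fin p) ℂ,
      (Matrix.trace (Bᴴ * (Φ : Matrix (Fin p) (Fin p) ℂ)ᴴ *
        Matrix.diagonal (fun k : Fin p => if p + (i : ℕ) ≤ (k : ℕ) + n then (1 : ℂ) else 0) *
        (Φ : Matrix (Fin p) (Fin p) ℂ) * B * (Aᴴ * A + Bᴴ * B)⁻¹)).re) =
      ∑ k ∈ Finset.Ici i, β k ^ 2 :=
  stmt9_general hnp A B V hV R hR β hβ0 hmono hB hAA i
end
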